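/- A divisor D is winnable (linearly equivalent to an effective divisor) if and only if the unique q-reduced divisor D' linearly equivalent to D satisfies D'(q) ≥ 0. -/

import Mathlib

open Finset

/-- A finite loopless undirected multigraph on vertex set `V`, given by symmetric
edge multiplicities. -/
structure Multigraph (V : Type) where
  E : V → V → ℕ
  symm : ∀ u v, E u v = E v u
  loopless : ∀ v, E v v = 0

variable {V : Type} [Fintype V] [DecidableEq V]

/-- The valence (degree) of a vertex: number of incident edges. -/
def Multigraph.val (G : Multigraph V) (v : V) : ℕ := ∑ w, G.E v w

/-- Connectivity of a multigraph. -/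
def Multigraph.Connected (G : Multigraph V) : Prop :=
  ∀ u v : V, Relation.ReflTransGen (fun a b => 0 < G.E a b) u v

/-- Degree of a divisor. -/
def divDeg (D : V → ℤ) : ℤ := ∑ v, D v

/-- The graph Laplacian applied to a firing script. -/
def lap (G : Multigraph V) (σ : V → ℤ) : V → ℤ :=
  fun v => ∑ w, (G.E v w : ℤ) * (σ v - σ w)

/-- Lending move at `v`. -/
def lend (G : Multigraph V) (D : V → ℤ) (v : V) : V → ℤ :=
  fun w => if w = v then D v - (G.val v : ℤ) else D w + (G.E v w : ℤ)

/-- Borrowing move at `v`. -/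
def borrow (G : Multigraph V) (D : V → ℤ) (v : V) : V → ℤ :=
  fun w => if w = v then D v + (G.val v : ℤ) else D w - (G.E v w : ℤ)

/-- Linear equivalence: generated by lending moves. -/
def LinEquiv (G : Multigraph V) : (V → ℤ) → (V → ℤ) → Prop :=
  Relation.ReflTransGen (fun D D' => ∃ v, D' = lend G D v)

/-- Number of edges from `v` to vertices outside `S`. -/
def outdegS (G : Multigraph V) (S : Finset V) (v : V) : ℕ := ∑ w ∈ Sᶜ, G.E v w

/-- Fire all vertices of `S` simultaneously once. -/
def fireSet (G : Multigraph V) (D : V → ℤ) (S : Finset V) : V → ℤ :=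
  fun v => if v ∈ S then D v - (outdegS G S v : ℤ) else D v + ∑ w ∈ S, (G.E v w : ℤ)

/-- A divisor is `q`-reduced: nonnegative away from `q`, and no nonempty subset of
`V \ {q}` can be legally fired (every such `S` has a vertex with fewer chips than its
outdegree from `S`). -/
def QReduced (G : Multigraph V) (q : V) (D : V → ℤ) : Prop :=
  (∀ v, v ≠ q → 0 ≤ D v) ∧
  ∀ S : Finset V, S.Nonempty → (∀ v ∈ S, v ≠ q) → ∃ v ∈ S, D v < (outdegS G S v : ℤ)

/-- A divisor is effective if all its values are nonnegative. -/
def Effective (D : V → ℤ) : Prop := ∀ v, 0 ≤ D v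

/-- A divisor is winnable if it is linearly equivalent to an effective divisor. -/
def Winnable (G : Multigraph V) (D : V → ℤ) : Prop :=
  ∃ D' : V → ℤ, LinEquiv G D D' ∧ Effective D'

set_option linter.unusedSectionVars false

lemma lap_add (G : Multigraph V) (σ τ : V → ℤ) : lap G (σ + τ) = lap G σ + lap G τ := by
  funext v
  simp only [lap, Pi.add_apply, ← sum_add_distrib]
  exact sum_congr rfl fun w _ => by ring

lemma lap_sub (G : Multigraph V) (σ τ : V → ℤ) : lap G (σ - τ) = lap G σ - lap G τ := by
  funext v
  simp only [lap, Pi.sub_apply, ← sum_sub_distrib]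
  exact sum_congr rfl fun w _ => by ring

lemma lend_eq_sub_lap_single (G : Multigraph V) (D : V → ℤ) (v : V) :
    lend G D v = D - lap G (Pi.single v 1) := by
  funext w
  by_cases hw : w = v
  · subst hw
    simp [lend, lap, Pi.single_apply, mul_sub, sum_sub_distrib, G.loopless, Multigraph.val]
  · simp [lend, lap, Pi.single_apply, hw, G.symm w v]

lemma LinEquiv.exists_eq_sub_lap {G : Multigraph V} {D D' : V → ℤ} (h : LinEquiv G D D') :
    ∃ σ, D' = D - lap G σ := by
  induction h with
  | refl => exact ⟨0, by ext; simp [lap]⟩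
  | tail _ hstep ih =>
    obtain ⟨σ, rfl⟩ := ih
    obtain ⟨v, rfl⟩ := hstep
    exact ⟨σ + Pi.single v 1, by rw [lend_eq_sub_lap_single, lap_add, sub_sub]⟩

lemma outdegS_le_lap_of_forall_le {G : Multigraph V} {σ : V → ℤ} {S : Finset V} {v : V}
    (hmax : ∀ w, σ w ≤ σ v) (hlt : ∀ w ∉ S, σ w < σ v) : (outdegS G S v : ℤ) ≤ lap G σ v := by
  rw [lap, ← sum_add_sum_compl S, outdegS, Nat.cast_sum]
  have hin : 0 ≤ ∑ w ∈ S, (G.E v w : ℤ) * (σ v - σ w) :=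
    sum_nonneg fun w _ => mul_nonneg (Int.natCast_nonneg _) (sub_nonneg.2 (hmax w))
  have hout : ∑ w ∈ Sᶜ, (G.E v w : ℤ) ≤ ∑ w ∈ Sᶜ, (G.E v w : ℤ) * (σ v - σ w) :=
    sum_le_sum fun w hw => le_mul_of_one_le_right (Int.natCast_nonneg _)
      (by linarith [hlt w (mem_compl.1 hw)])
  linarith

lemma QReduced.effective_of_nonneg {G : Multigraph V} {q : V} {D : V → ℤ}
    (hred : QReduced G q D) (hq : 0 ≤ D q) : Effective D := fun v => by
  by_cases hv : v = q
  · exact hv ▸ hq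
  · exact hred.1 v hv

/-- If some firing script `σ` makes a `q`-reduced divisor effective, look at the set `A` where
`σ` is maximal. If `q ∉ A`, reducedness gives a vertex of `A` losing more chips than it has;
so `q ∈ A`, and then `q` itself can only gain chips. -/
lemma QReduced.nonneg_of_effective_sub_lap {G : Multigraph V} {q : V} {D : V → ℤ}
    (hred : QReduced G q D) {σ : V → ℤ} (heff : Effective (D - lap G σ)) : 0 ≤ D q := by
  obtain ⟨u, -, hu⟩ := exists_max_image univ σ ⟨q, mem_univ q⟩
  set A := univ.filter fun w => σ w = σ u
  have hlt : ∀ v ∈ A, ∀ w ∉ A, σ w < σ v := fun v hv w hw => by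
    simp only [A, mem_filter, mem_univ, true_and] at hv hw
    exact hv ▸ lt_of_le_of_ne (hu w (mem_univ w)) hw
  have hmax : ∀ v ∈ A, ∀ w, σ w ≤ σ v := fun v hv w => by
    simp only [A, mem_filter, mem_univ, true_and] at hv
    exact hv ▸ hu w (mem_univ w)
  by_cases hqA : q ∈ A
  · have hlap := outdegS_le_lap_of_forall_le (G := G) (hmax q hqA) (hlt q hqA)
    have hq := heff q
    simp only [Pi.sub_apply] at hq
    linarith [Int.natCast_nonneg (outdegS G A q)]
  · obtain ⟨v, hvA, hv⟩ := hred.2 A ⟨u, by simp [A]⟩ fun v hv hvq => hqA (hvq ▸ hv)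
    have hlap := outdegS_le_lap_of_forall_le (G := G) (hmax v hvA) (hlt v hvA)
    have hv' := heff v
    simp only [Pi.sub_apply] at hv'
    linarith

theorem winnable_iff_qreduced_nonneg_general (G : Multigraph V) (q : V)
    (D D' : V → ℤ) (hequiv : LinEquiv G D D') (hred : QReduced G q D') :
    Winnable G D ↔ 0 ≤ D' q := by
  refine ⟨fun ⟨W, hW, hWeff⟩ => ?_, fun hq => ⟨D', hequiv, hred.effective_of_nonneg hq⟩⟩
  obtain ⟨σ, rfl⟩ := hequiv.exists_eq_sub_lap
  obtain ⟨τ, rfl⟩ := hW.exists_eq_sub_lap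
  refine hred.nonneg_of_effective_sub_lap (σ := τ - σ) ?_
  rwa [lap_sub, sub_sub_sub_cancel_right]

/-- `D` is winnable iff the `q`-reduced divisor `D'` linearly equivalent to `D`
satisfies `D'(q) ≥ 0`. -/
theorem winnable_iff_qreduced_nonneg (G : Multigraph V) (hG : G.Connected) (q : V)
    (D D' : V → ℤ) (hequiv : LinEquiv G D D') (hred : QReduced G q D') :
    Winnable G D ↔ 0 ≤ D' q :=
  winnable_iff_qreduced_nonneg_general G q D D' hequiv hred
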